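/- arXiv:1308.5809 — 3 statements merged into one kernel-verified Lean document; each statement's English description precedes it below -/
import Mathlib

section
/- Lemma 1 (IASB1 is tighter than CA-DSB): In the per-user per-tone spectrum optimization setup, for all s ∈ [0, M]: f(s) ≤ f^IASB1(s) ≤ f^CADSB(s). -/
/-!
`f - f1_IASB1 = -∑ m ∈ I, w_m log (1 + s̃_m / int_m s)` is concave on `[0, ∞)`: `x ↦ log (1 + c / x)`
is convex on `(0, ∞)` because its derivative `-c / (x (x + c))` increases, and `int_m` is affine.
So `f - f1_IASB1` lies below its tangent at `s̃`, which is `f ≤ f^IASB1`.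
Since linearization is linear, `f^CADSB - f^IASB1 = h - LIN h` for `h = f1_CADSB - f1_IASB1`, and on
`[0, ∞)` we have `h = -w log int - ∑ m ∈ I, w_m log (rec_m s)`, which is convex by concavity of
`log`; so `h` lies above its tangent at `s̃`.
-/

open Real Set

theorem ConvexOn.finset_sum {𝕜 E β ι : Type*} [Semiring 𝕜] [PartialOrder 𝕜] [AddCommMonoid E]
    [AddCommMonoid β] [PartialOrder β] [IsOrderedAddMonoid β] [SMul 𝕜 E] [Module 𝕜 β]
    {s : Set E} (hs : Convex 𝕜 s) (t : Finset ι) {f : ι → E → β}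
    (hf : ∀ i ∈ t, ConvexOn 𝕜 s (f i)) : ConvexOn 𝕜 s fun x => ∑ i ∈ t, f i x := by
  classical
  induction t using Finset.induction_on with
  | empty => simpa using convexOn_const 0 hs
  | insert i t hi ih =>
    simp only [Finset.sum_insert hi]
    exact (hf i (t.mem_insert_self i)).add (ih fun j hj => hf j (Finset.mem_insert_of_mem hj))

theorem ConcaveOn.finset_sum {𝕜 E β ι : Type*} [Semiring 𝕜] [PartialOrder 𝕜] [AddCommMonoid E]
    [AddCommMonoid β] [PartialOrder β] [IsOrderedAddMonoid β] [SMul 𝕜 E] [Module 𝕜 β]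
    {s : Set E} (hs : Convex 𝕜 s) (t : Finset ι) {f : ι → E → β}
    (hf : ∀ i ∈ t, ConcaveOn 𝕜 s (f i)) : ConcaveOn 𝕜 s fun x => ∑ i ∈ t, f i x :=
  ConvexOn.finset_sum (β := βᵒᵈ) hs t hf

section

variable {S : Set ℝ} {g : ℝ → ℝ}

theorem ConvexOn.comp_mul_add (hg : ConvexOn ℝ S g) (a b : ℝ) :
    ConvexOn ℝ ((fun x => a * x + b) ⁻¹' S) fun x => g (a * x + b) :=
  hg.comp_affineMap (a • AffineMap.id ℝ ℝ + AffineMap.const ℝ ℝ b)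

theorem ConcaveOn.comp_mul_add (hg : ConcaveOn ℝ S g) (a b : ℝ) :
    ConcaveOn ℝ ((fun x => a * x + b) ⁻¹' S) fun x => g (a * x + b) :=
  hg.comp_affineMap (a • AffineMap.id ℝ ℝ + AffineMap.const ℝ ℝ b)

theorem ConvexOn.add_deriv_mul_sub_le {x y : ℝ} (hg : ConvexOn ℝ S g) (hx : x ∈ S) (hy : y ∈ S)
    (hgx : DifferentiableAt ℝ g x) : g x + deriv g x * (y - x) ≤ g y := by
  rcases lt_trichotomy x y with hxy | rfl | hyx
  · have := hg.deriv_le_slope hx hy hxy hgx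
    rw [slope_def_field, le_div_iff₀ (sub_pos.2 hxy)] at this
    linarith
  · simp
  · have := hg.slope_le_deriv hy hx hyx hgx
    rw [slope_def_field, div_le_iff₀ (sub_pos.2 hyx)] at this
    linarith

theorem ConcaveOn.le_add_deriv_mul_sub {x y : ℝ} (hg : ConcaveOn ℝ S g) (hx : x ∈ S) (hy : y ∈ S)
    (hgx : DifferentiableAt ℝ g x) : g y ≤ g x + deriv g x * (y - x) := by
  have := (neg_convexOn_iff.2 hg).add_deriv_mul_sub_le hx hy hgx.neg
  simp only [Pi.neg_apply, deriv.neg'] at this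
  linarith

end

/-- The paper's `f^X = f1_X + LIN (f - f1_X)`, with `LIN` the linearization at `x₀`. -/
noncomputable def linApprox (f f₁ : ℝ → ℝ) (x₀ s : ℝ) : ℝ :=
  f₁ s + (f x₀ - f₁ x₀) + deriv (fun x => f x - f₁ x) x₀ * (s - x₀)

section

variable {f f₁ f₂ : ℝ → ℝ} {S : Set ℝ} {x₀ s : ℝ}

theorem le_linApprox (h : ConcaveOn ℝ S fun x => f x - f₁ x) (hx₀ : x₀ ∈ S) (hs : s ∈ S)
    (hd : DifferentiableAt ℝ (fun x => f x - f₁ x) x₀) : f s ≤ linApprox f f₁ x₀ s := by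
  have := h.le_add_deriv_mul_sub hx₀ hs hd
  rw [linApprox]
  linarith

theorem linApprox_le_linApprox (h : ConvexOn ℝ S fun x => f₂ x - f₁ x) (hx₀ : x₀ ∈ S)
    (hs : s ∈ S) (hf : DifferentiableAt ℝ f x₀) (hf₁ : DifferentiableAt ℝ f₁ x₀)
    (hf₂ : DifferentiableAt ℝ f₂ x₀) : linApprox f f₁ x₀ s ≤ linApprox f f₂ x₀ s := by
  have := h.add_deriv_mul_sub_le hx₀ hs (hf₂.sub hf₁)
  rw [deriv_fun_sub hf₂ hf₁] at this
  rw [linApprox, linApprox, deriv_fun_sub hf hf₁, deriv_fun_sub hf hf₂]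
  linarith

end

theorem hasDerivAt_log_one_add_div {c x : ℝ} (hc : 0 ≤ c) (hx : 0 < x) :
    HasDerivAt (fun x => log (1 + c / x)) (-(c / (x * (x + c)))) x := by
  have := ((hasDerivAt_const x c).fun_div (hasDerivAt_id' x) hx.ne').const_add 1 |>.log
    (by positivity)
  convert this using 1
  field_simp
  ring

theorem convexOn_log_one_add_div {c : ℝ} (hc : 0 ≤ c) :
    ConvexOn ℝ (Ioi 0) fun x => log (1 + c / x) := by
  refine MonotoneOn.convexOn_of_deriv (convex_Ioi 0)
    (fun x hx => (hasDerivAt_log_one_add_div hc hx).continuousAt.continuousWithinAt)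
    (by
      rw [interior_Ioi]
      exact fun x hx => (hasDerivAt_log_one_add_div hc hx).differentiableAt.differentiableWithinAt)
    ?_
  rw [interior_Ioi]
  intro x (hx : 0 < x) y (hy : 0 < y) hxy
  rw [(hasDerivAt_log_one_add_div hc hx).deriv, (hasDerivAt_log_one_add_div hc hy).deriv,
    neg_le_neg_iff]
  exact div_le_div_of_nonneg_left hc (by positivity) (by gcongr)

section

variable {ι : Type*} (I : Finset ι) {wI aI sI zI : ι → ℝ}

theorem convexOn_sum_log_one_add_div (hwI : ∀ m ∈ I, 0 ≤ wI m) (haI : ∀ m ∈ I, 0 ≤ aI m)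
    (hsI : ∀ m ∈ I, 0 ≤ sI m) (hzI : ∀ m ∈ I, 0 < zI m) :
    ConvexOn ℝ (Ici 0) fun s => ∑ m ∈ I, wI m * log (1 + sI m / (aI m * s + zI m)) := by
  refine ConvexOn.finset_sum (convex_Ici 0) I fun m hm => ?_
  have hpos : Ici 0 ⊆ (fun s => aI m * s + zI m) ⁻¹' Ioi 0 := fun s (hs : 0 ≤ s) => by
    have := haI m hm; have := hzI m hm
    show 0 < aI m * s + zI m
    positivity
  exact (((convexOn_log_one_add_div (hsI m hm)).comp_mul_add _ _).subset hpos
    (convex_Ici 0)).smul (hwI m hm)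

theorem concaveOn_sum_log_add_mul_add (hwI : ∀ m ∈ I, 0 ≤ wI m) (haI : ∀ m ∈ I, 0 ≤ aI m)
    (hsI : ∀ m ∈ I, 0 ≤ sI m) (hzI : ∀ m ∈ I, 0 < zI m) :
    ConcaveOn ℝ (Ici 0) fun s => ∑ m ∈ I, wI m * log (sI m + aI m * s + zI m) := by
  refine ConcaveOn.finset_sum (convex_Ici 0) I fun m hm => ?_
  have hpos : Ici 0 ⊆ (fun s => aI m * s + (sI m + zI m)) ⁻¹' Ioi 0 := fun s (hs : 0 ≤ s) => by
    have := haI m hm; have := hsI m hm; have := hzI m hm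
    show 0 < aI m * s + (sI m + zI m)
    positivity
  refine ((((strictConcaveOn_log_Ioi.concaveOn).comp_mul_add _ _).subset hpos
    (convex_Ici 0)).smul (hwI m hm)).congr fun s _ => ?_
  simp only [smul_eq_mul]
  ring_nf

end

theorem IASB1_tighter_than_CADSB_general
    {ι : Type*} (I : Finset ι)
    (M st w intn : ℝ) (wI aI sI zI : ι → ℝ)
    (hst : st ∈ Set.Icc 0 M)
    (hintn : 0 < intn)
    (hwI : ∀ m ∈ I, 0 < wI m) (haI : ∀ m ∈ I, 0 ≤ aI m)
    (hsI : ∀ m ∈ I, 0 < sI m) (hzI : ∀ m ∈ I, 0 < zI m)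
    (f f1IASB1 f1CADSB fIASB1 fCADSB : ℝ → ℝ)
    (hf : f = fun s => -w * Real.log (1 + s / intn)
        - ∑ m ∈ I, wI m * Real.log (1 + sI m / (aI m * s + zI m)))
    (hf1IASB1 : f1IASB1 = fun s => -w * Real.log (1 + s / intn))
    (hf1CADSB : f1CADSB = fun s => -w * Real.log (s + intn)
        - ∑ m ∈ I, wI m * Real.log (sI m + aI m * s + zI m))
    (hfIASB1 : fIASB1 = fun s => f1IASB1 s + (f st - f1IASB1 st)
        + deriv (fun x => f x - f1IASB1 x) st * (s - st))
    (hfCADSB : fCADSB = fun s => f1CADSB s + (f st - f1CADSB st)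
        + deriv (fun x => f x - f1CADSB x) st * (s - st)) :
    ∀ s ∈ Set.Icc 0 M, f s ≤ fIASB1 s ∧ fIASB1 s ≤ fCADSB s := by
  obtain ⟨hst, -⟩ := hst
  replace hwI : ∀ m ∈ I, 0 ≤ wI m := fun m hm => (hwI m hm).le
  replace hsI : ∀ m ∈ I, 0 ≤ sI m := fun m hm => (hsI m hm).le
  obtain ⟨hf_diff, hf1IASB1_diff, hf1CADSB_diff⟩ :
      DifferentiableAt ℝ f st ∧ DifferentiableAt ℝ f1IASB1 st ∧ DifferentiableAt ℝ f1CADSB st := by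
    subst hf hf1IASB1 hf1CADSB
    refine ⟨?_, ?_, ?_⟩ <;> fun_prop (disch := first
      | positivity
      | have := haI _ ‹_›; have := hsI _ ‹_›; have := hzI _ ‹_›; positivity)
  have hconc : ConcaveOn ℝ (Ici 0) fun x => f x - f1IASB1 x :=
    (convexOn_sum_log_one_add_div I hwI haI hsI hzI).neg.congr fun x _ => by
      simp only [hf, hf1IASB1, Pi.neg_apply]
      ring
  have hconv : ConvexOn ℝ (Ici 0) fun x => f1CADSB x - f1IASB1 x :=
    ((concaveOn_sum_log_add_mul_add I hwI haI hsI hzI).neg.add_const (-w * log intn)).congr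
      fun x (hx : 0 ≤ x) => by
        have hlog : log (1 + x / intn) = log (x + intn) - log intn := by
          rw [← log_div (by positivity) hintn.ne', add_div, div_self hintn.ne', add_comm]
        simp only [hf1CADSB, hf1IASB1, Pi.add_apply, Pi.neg_apply, hlog]
        ring
  rintro s ⟨hs, -⟩
  subst hfIASB1 hfCADSB
  exact ⟨le_linApprox hconc hst hs (hf_diff.sub hf1IASB1_diff),
    linApprox_le_linApprox hconv hst hs hf_diff hf1IASB1_diff hf1CADSB_diff⟩

/-- Lemma 1 (IASB1 is tighter than CA-DSB): in the per-user per-tone spectrum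
optimization setup, the IASB1 approximation upper bounds the true objective `f`
on `[0, M]` and is itself upper bounded by the CA-DSB approximation.
Here `f^X = f1_X + LIN(f − f1_X)` with `LIN` the linearization at `s̃`. -/
theorem IASB1_tighter_than_CADSB
    {ι : Type*} (I : Finset ι)
    (M st w intn : ℝ) (wI aI sI zI : ι → ℝ)
    (hM : 0 < M) (hst : st ∈ Set.Icc 0 M)
    (hw : 0 < w) (hintn : 0 < intn)
    (hwI : ∀ m ∈ I, 0 < wI m) (haI : ∀ m ∈ I, 0 ≤ aI m)
    (hsI : ∀ m ∈ I, 0 < sI m) (hzI : ∀ m ∈ I, 0 < zI m)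
    (f f1IASB1 f1CADSB fIASB1 fCADSB : ℝ → ℝ)
    (hf : f = fun s => -w * Real.log (1 + s / intn)
        - ∑ m ∈ I, wI m * Real.log (1 + sI m / (aI m * s + zI m)))
    (hf1IASB1 : f1IASB1 = fun s => -w * Real.log (1 + s / intn))
    (hf1CADSB : f1CADSB = fun s => -w * Real.log (s + intn)
        - ∑ m ∈ I, wI m * Real.log (sI m + aI m * s + zI m))
    (hfIASB1 : fIASB1 = fun s => f1IASB1 s + (f st - f1IASB1 st)
        + deriv (fun x => f x - f1IASB1 x) st * (s - st))
    (hfCADSB : fCADSB = fun s => f1CADSB s + (f st - f1CADSB st)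
        + deriv (fun x => f x - f1CADSB x) st * (s - st)) :
    ∀ s ∈ Set.Icc 0 M, f s ≤ fIASB1 s ∧ fIASB1 s ≤ fCADSB s :=
  IASB1_tighter_than_CADSB_general I M st w intn wI aI sI zI hst hintn hwI haI hsI hzI f f1IASB1
    f1CADSB fIASB1 fCADSB hf hf1IASB1 hf1CADSB hfIASB1 hfCADSB
end

section
/- Validity of the IASB2 tuning value (equation (38)): In the per-user per-tone spectrum optimization setup, define L* = Σ_{m∈I} w_m·s̃_m·a_m²·(s̃_m + 2·int_m(M)) / (2·(rec_m(M)·int_m(M))²). Then the function g(s) = −Σ_{m∈I} w_m·log(1 + s̃_m/int_m(s)) + L*·(s − s̃)² satisfies g″(s) ≤ 0 for all s ∈ [0, M], with equality g″(M) = 0; in particular g is concave on [0, M] and hence upper bounded on [0, M] by its tangent line at any point of [0, M]. -/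
/-!
With `t = a s + z`, each log term `φ(s) = log (1 + c / t) = log (c + t) - log t` has second
derivative `a² (t⁻² - (c + t)⁻²) = a² c (c + 2t) / ((c + t) t)²`. Since
`t⁻² - (c + t)⁻² = c / (t² (c + t)) + c / (t (c + t)²)`, this curvature decreases as `t`, hence `s`,
grows. So `g'' = 2 L* - Σ w_m φ_m''` increases on `[0, M]`, and `L*` is chosen so that `2 L*` is
exactly the total curvature `Σ w_m φ_m''(M)` at the right endpoint: `g'' ≤ 0` with equality at `M`.
Concavity and the tangent-line bound follow.
-/

open Real Set Filter Topology

lemma ConcaveOn.le_add_mul_sub_of_hasDerivAt {S : Set ℝ} {f : ℝ → ℝ} {f' x y : ℝ}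
    (hf : ConcaveOn ℝ S f) (hx : x ∈ S) (hy : y ∈ S) (hfx : HasDerivAt f f' x) :
    f y ≤ f x + f' * (y - x) := by
  rcases lt_trichotomy y x with hyx | rfl | hxy
  · have hslope := hf.le_slope_of_hasDerivAt hy hx hyx hfx
    rw [slope_def_field, le_div_iff₀ (sub_pos.2 hyx)] at hslope
    linarith
  · simp
  · have hslope := hf.slope_le_of_hasDerivAt hx hy hxy hfx
    rw [slope_def_field, div_le_iff₀ (sub_pos.2 hxy)] at hslope
    linarith

lemma deriv_deriv_eq_of_hasDerivAt {𝕜 F : Type*} [NontriviallyNormedField 𝕜]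
    [NormedAddCommGroup F] [NormedSpace 𝕜 F] {f f' : 𝕜 → F} {f'' : F} {x : 𝕜}
    (hf : ∀ᶠ y in 𝓝 x, HasDerivAt f (f' y) y) (hf' : HasDerivAt f' f'' x) :
    deriv (deriv f) x = f'' :=
  have hderiv : deriv f =ᶠ[𝓝 x] f' := hf.mono fun _ hy => hy.deriv
  hderiv.deriv_eq.trans hf'.deriv

lemma hasDerivAt_log_one_add_div_affine {a c z s : ℝ} (ht : a * s + z ≠ 0)
    (hct : c + (a * s + z) ≠ 0) :
    HasDerivAt (fun s => log (1 + c / (a * s + z)))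
      (a / (c + (a * s + z)) - a / (a * s + z)) s := by
  have hlin : HasDerivAt (fun s => a * s + z) a s := by
    simpa using ((hasDerivAt_id s).const_mul a).add_const z
  have htc : a * s + z + c ≠ 0 := by rwa [add_comm]
  have h1 : 1 + c / (a * s + z) ≠ 0 := by
    rw [one_add_div ht]; exact div_ne_zero htc ht
  refine ((((hasDerivAt_const s c).fun_div hlin ht).const_add 1).log h1).congr_deriv ?_
  rw [one_add_div ht]
  field_simp
  ring

lemma hasDerivAt_div_add_affine_sub_div_affine {a c z s : ℝ} (ht : a * s + z ≠ 0)
    (hct : c + (a * s + z) ≠ 0) :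
    HasDerivAt (fun s => a / (c + (a * s + z)) - a / (a * s + z))
      (a ^ 2 * (((a * s + z) ^ 2)⁻¹ - ((c + (a * s + z)) ^ 2)⁻¹)) s := by
  have hlin : HasDerivAt (fun s => a * s + z) a s := by
    simpa using ((hasDerivAt_id s).const_mul a).add_const z
  refine (((hasDerivAt_const s a).fun_div (hlin.const_add c) hct).fun_sub
    ((hasDerivAt_const s a).fun_div hlin ht)).congr_deriv ?_
  field_simp
  ring

lemma antitoneOn_inv_sq_sub_inv_add_sq {c : ℝ} (hc : 0 ≤ c) :
    AntitoneOn (fun t : ℝ => (t ^ 2)⁻¹ - ((c + t) ^ 2)⁻¹) (Ioi 0) := by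
  have hsplit : ∀ t : ℝ, 0 < t →
      (t ^ 2)⁻¹ - ((c + t) ^ 2)⁻¹ = c / (t ^ 2 * (c + t)) + c / (t * (c + t) ^ 2) := by
    intro t ht
    field_simp
    ring
  intro t ht T hT htT
  simp only [mem_Ioi] at ht hT
  simp only [hsplit t ht, hsplit T hT]
  gcongr

namespace IASB2

noncomputable def logRateCurvature (a c z s : ℝ) : ℝ :=
  a ^ 2 * (((a * s + z) ^ 2)⁻¹ - ((c + (a * s + z)) ^ 2)⁻¹)

lemma logRateCurvature_antitoneOn {a c z : ℝ} (ha : 0 ≤ a) (hc : 0 ≤ c) :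
    AntitoneOn (logRateCurvature a c z) {s | 0 < a * s + z} := fun s hs s' hs' hss' =>
  mul_le_mul_of_nonneg_left
    (antitoneOn_inv_sq_sub_inv_add_sq hc hs hs' (by gcongr)) (sq_nonneg a)

lemma logRateCurvature_eq_div {a c z s : ℝ} (ht : 0 < a * s + z) (hc : 0 ≤ c) :
    logRateCurvature a c z s =
      a ^ 2 * c * (c + 2 * (a * s + z)) / ((c + a * s + z) * (a * s + z)) ^ 2 := by
  have hct : c + a * s + z ≠ 0 := by linarith
  unfold logRateCurvature
  field_simp
  ring

section Objective

variable {ι : Type*} (I : Finset ι) (w a c z : ι → ℝ) (L st : ℝ)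

noncomputable def objective (s : ℝ) : ℝ :=
  -(∑ m ∈ I, w m * log (1 + c m / (a m * s + z m))) + L * (s - st) ^ 2

noncomputable def objectiveDeriv (s : ℝ) : ℝ :=
  -(∑ m ∈ I, w m * (a m / (c m + (a m * s + z m)) - a m / (a m * s + z m))) + L * (2 * (s - st))

variable {I w a c z L st}

lemma hasDerivAt_objective {s : ℝ} (hc : ∀ m ∈ I, 0 ≤ c m)
    (hs : ∀ m ∈ I, 0 < a m * s + z m) :
    HasDerivAt (objective I w a c z L st) (objectiveDeriv I w a c z L st s) s := by
  have hsum := HasDerivAt.fun_sum fun m hm =>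
    (hasDerivAt_log_one_add_div_affine (c := c m) (hs m hm).ne'
      (by linarith [hc m hm, hs m hm])).const_mul (w m)
  have hquad : HasDerivAt (fun s => L * (s - st) ^ 2) (L * (2 * (s - st))) s := by
    simpa using (((hasDerivAt_id s).sub_const st).pow 2).const_mul L
  exact hsum.neg.add hquad

lemma hasDerivAt_objectiveDeriv {s : ℝ} (hc : ∀ m ∈ I, 0 ≤ c m)
    (hs : ∀ m ∈ I, 0 < a m * s + z m) :
    HasDerivAt (objectiveDeriv I w a c z L st)
      (-(∑ m ∈ I, w m * logRateCurvature (a m) (c m) (z m) s) + 2 * L) s := by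
  have hsum := HasDerivAt.fun_sum fun m hm =>
    (hasDerivAt_div_add_affine_sub_div_affine (c := c m) (hs m hm).ne'
      (by linarith [hc m hm, hs m hm])).const_mul (w m)
  have hlin : HasDerivAt (fun s => L * (2 * (s - st))) (2 * L) s := by
    simpa [mul_comm] using (((hasDerivAt_id s).sub_const st).const_mul 2).const_mul L
  exact hsum.neg.add hlin

lemma deriv_deriv_objective {s : ℝ} (hc : ∀ m ∈ I, 0 ≤ c m)
    (hs : ∀ m ∈ I, 0 < a m * s + z m) :
    deriv (deriv (objective I w a c z L st)) s =
      -(∑ m ∈ I, w m * logRateCurvature (a m) (c m) (z m) s) + 2 * L := by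
  refine deriv_deriv_eq_of_hasDerivAt ?_ (hasDerivAt_objectiveDeriv (st := st) hc hs)
  have hnear : ∀ᶠ y in 𝓝 s, ∀ m ∈ I, 0 < a m * y + z m :=
    (eventually_all_finset I).2 fun m hm =>
      (isOpen_lt continuous_const (by fun_prop)).mem_nhds (hs m hm)
  exact hnear.mono fun y hy => hasDerivAt_objective hc hy

lemma concaveOn_objective {S : Set ℝ} (hS : Convex ℝ S) (hc : ∀ m ∈ I, 0 ≤ c m)
    (hSa : ∀ s ∈ S, ∀ m ∈ I, 0 < a m * s + z m)
    (hcurv : ∀ s ∈ S, 2 * L ≤ ∑ m ∈ I, w m * logRateCurvature (a m) (c m) (z m) s) :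
    ConcaveOn ℝ S (objective I w a c z L st) := by
  refine concaveOn_of_hasDerivWithinAt2_nonpos hS
    (fun s hs => (hasDerivAt_objective hc (hSa s hs)).continuousAt.continuousWithinAt)
    (fun s hs => (hasDerivAt_objective hc (hSa s (interior_subset hs))).hasDerivWithinAt)
    (fun s hs => (hasDerivAt_objectiveDeriv hc (hSa s (interior_subset hs))).hasDerivWithinAt)
    fun s hs => ?_
  linarith [hcurv s (interior_subset hs)]

end Objective

end IASB2

open IASB2

theorem IASB2_tuning_value_valid_general
    {ι : Type*} (I : Finset ι)
    (M st : ℝ) (wI aI sI zI : ι → ℝ)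
    (hM : 0 < M)
    (hwI : ∀ m ∈ I, 0 < wI m) (haI : ∀ m ∈ I, 0 ≤ aI m)
    (hsI : ∀ m ∈ I, 0 < sI m) (hzI : ∀ m ∈ I, 0 < zI m)
    (Lstar : ℝ)
    (hLstar : Lstar = ∑ m ∈ I, wI m * sI m * (aI m) ^ 2 * (sI m + 2 * (aI m * M + zI m))
        / (2 * ((sI m + aI m * M + zI m) * (aI m * M + zI m)) ^ 2))
    (g : ℝ → ℝ)
    (hg : g = fun s =>
        -(∑ m ∈ I, wI m * Real.log (1 + sI m / (aI m * s + zI m))) + Lstar * (s - st) ^ 2) :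
    (∀ s ∈ Set.Icc 0 M, deriv (deriv g) s ≤ 0) ∧
    deriv (deriv g) M = 0 ∧
    ConcaveOn ℝ (Set.Icc 0 M) g ∧
    ∀ x ∈ Set.Icc 0 M, ∀ s ∈ Set.Icc 0 M, g s ≤ g x + deriv g x * (s - x) := by
  obtain rfl : g = objective I wI aI sI zI Lstar st := hg
  have hc : ∀ m ∈ I, 0 ≤ sI m := fun m hm => (hsI m hm).le
  have hpos : ∀ s ∈ Icc 0 M, ∀ m ∈ I, 0 < aI m * s + zI m := fun s hs m hm =>
    add_pos_of_nonneg_of_pos (mul_nonneg (haI m hm) hs.1) (hzI m hm)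
  have hMmem : M ∈ Icc 0 M := right_mem_Icc.2 hM.le
  have hL : 2 * Lstar = ∑ m ∈ I, wI m * logRateCurvature (aI m) (sI m) (zI m) M := by
    rw [hLstar, Finset.mul_sum]
    refine Finset.sum_congr rfl fun m hm => ?_
    rw [logRateCurvature_eq_div (hpos M hMmem m hm) (hc m hm)]
    field_simp
  have hcurv : ∀ s ∈ Icc 0 M,
      2 * Lstar ≤ ∑ m ∈ I, wI m * logRateCurvature (aI m) (sI m) (zI m) s := fun s hs =>
    hL ▸ Finset.sum_le_sum fun m hm => mul_le_mul_of_nonneg_left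
      (logRateCurvature_antitoneOn (haI m hm) (hc m hm) (hpos s hs m hm) (hpos M hMmem m hm)
        hs.2) (hwI m hm).le
  have hconc := concaveOn_objective (st := st) (convex_Icc 0 M) hc hpos hcurv
  refine ⟨fun s hs => ?_, ?_, hconc, fun x hx s hs => ?_⟩
  · rw [deriv_deriv_objective hc (hpos s hs)]
    linarith [hcurv s hs]
  · rw [deriv_deriv_objective hc (hpos M hMmem), hL]
    ring
  · have hx' := hasDerivAt_objective (w := wI) (L := Lstar) (st := st) hc (hpos x hx)
    rw [hx'.deriv]
    exact hconc.le_add_mul_sub_of_hasDerivAt hx hs hx'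

/-- Validity of the IASB2 tuning value (equation (38)): with the closed-form value
`L* = Σ_{m∈I} w_m·s̃_m·a_m²·(s̃_m + 2·int_m(M)) / (2·(rec_m(M)·int_m(M))²)`, the
function `g(s) = −Σ_{m∈I} w_m·log(1 + s̃_m/int_m(s)) + L*·(s − s̃)²` has `g″ ≤ 0` on
`[0, M]` with `g″(M) = 0`; in particular `g` is concave on `[0, M]` and upper
bounded on `[0, M]` by its tangent line at any point of `[0, M]`. -/
theorem IASB2_tuning_value_valid
    {ι : Type*} (I : Finset ι)
    (M st w intn : ℝ) (wI aI sI zI : ι → ℝ)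
    (hM : 0 < M) (hst : st ∈ Set.Icc 0 M)
    (hw : 0 < w) (hintn : 0 < intn)
    (hwI : ∀ m ∈ I, 0 < wI m) (haI : ∀ m ∈ I, 0 ≤ aI m)
    (hsI : ∀ m ∈ I, 0 < sI m) (hzI : ∀ m ∈ I, 0 < zI m)
    (Lstar : ℝ)
    (hLstar : Lstar = ∑ m ∈ I, wI m * sI m * (aI m) ^ 2 * (sI m + 2 * (aI m * M + zI m))
        / (2 * ((sI m + aI m * M + zI m) * (aI m * M + zI m)) ^ 2))
    (g : ℝ → ℝ)
    (hg : g = fun s =>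
        -(∑ m ∈ I, wI m * Real.log (1 + sI m / (aI m * s + zI m))) + Lstar * (s - st) ^ 2) :
    (∀ s ∈ Set.Icc 0 M, deriv (deriv g) s ≤ 0) ∧
    deriv (deriv g) M = 0 ∧
    ConcaveOn ℝ (Set.Icc 0 M) g ∧
    ∀ x ∈ Set.Icc 0 M, ∀ s ∈ Set.Icc 0 M, g s ≤ g x + deriv g x * (s - x) :=
  IASB2_tuning_value_valid_general I M st wI aI sI zI hM hwI haI hsI hzI Lstar hLstar g hg
end

section
/- Lemma 7, second part (IASB10 is tighter than SCALE): In the per-user per-tone spectrum optimization setup, assume additionally s̃ > 0. Then for all s ∈ (0, M]: f(s) ≤ f^IASB10(s) ≤ f^SCALE(s). -/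
/-!
For `t > 0` put `α = t / (1 + t)` and `c = log (1 + t) - α log t`. Then
`log (1 + x) ≥ α log x + c` for all `x > 0`: this is concavity of `log` at the point
`1 + x = (1 - α) (1 + t) + α (x (1 + t) / t)`. Both sides agree at `x = t`, and so do their
derivatives. Hence `f1_IASB10 - f` and `f1_SCALE - f1_IASB10` are nonnegative combinations of
the gaps `scaleGap t x` of this bound, taken at `x = s̃_m / int_m(s)` and `x = s / int`. Both
vanish to first order at `s̃`, so the correction `LIN (f - f1_X)` is zero and `f^X = f1_X`.
-/

open Real

noncomputable def scaleGap (t x : ℝ) : ℝ :=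
  log (1 + x) - (t / (1 + t) * log x + (log (1 + t) - t / (1 + t) * log t))

lemma scaleGap_nonneg {t x : ℝ} (ht : 0 < t) (hx : 0 < x) : 0 ≤ scaleGap t x := by
  have hconc := strictConcaveOn_log_Ioi.concaveOn.2
    (Set.mem_Ioi.2 (by linarith : (0 : ℝ) < 1 + t))
    (Set.mem_Ioi.2 (by positivity : 0 < x * (1 + t) / t))
    (by positivity : 0 ≤ 1 / (1 + t)) (by positivity : 0 ≤ t / (1 + t)) (by field_simp)
  have hmix : 1 / (1 + t) * (1 + t) + t / (1 + t) * (x * (1 + t) / t) = 1 + x := by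
    field_simp
  simp only [smul_eq_mul, hmix] at hconc
  rw [log_div (by positivity) ht.ne', log_mul hx.ne' (by positivity)] at hconc
  have hsplit : 1 / (1 + t) * log (1 + t) + t / (1 + t) * (log x + log (1 + t) - log t)
      = t / (1 + t) * log x + (log (1 + t) - t / (1 + t) * log t) := by
    field_simp; ring
  unfold scaleGap; linarith

lemma scaleGap_self (t : ℝ) : scaleGap t t = 0 := by
  unfold scaleGap; ring

lemma hasDerivAt_scaleGap_self {t : ℝ} (ht : 0 < t) : HasDerivAt (scaleGap t) 0 t := by
  have h1 : HasDerivAt (fun x => log (1 + x)) (1 / (1 + t)) t := by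
    simpa using ((hasDerivAt_id t).const_add 1).log (by simp only [id]; linarith)
  have h2 := ((hasDerivAt_log ht.ne').const_mul (t / (1 + t))).add_const
    (log (1 + t) - t / (1 + t) * log t)
  exact (h1.sub h2).congr_deriv (by field_simp; ring)

lemma hasDerivAt_scaleGap_comp {φ : ℝ → ℝ} {t s₀ : ℝ}
    (hφ : DifferentiableAt ℝ φ s₀) (ht : φ s₀ = t) (htpos : 0 < t) :
    HasDerivAt (fun s => scaleGap t (φ s)) 0 s₀ := by
  subst ht
  exact ((hasDerivAt_scaleGap_self htpos).comp s₀ hφ.hasDerivAt).congr_deriv (zero_mul _)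

lemma hasDerivAt_sum_mul_scaleGap_comp {ι : Type*} (I : Finset ι) (c t : ι → ℝ)
    {φ : ι → ℝ → ℝ} {s₀ : ℝ} (hφ : ∀ m ∈ I, DifferentiableAt ℝ (φ m) s₀)
    (ht : ∀ m ∈ I, φ m s₀ = t m) (htpos : ∀ m ∈ I, 0 < t m) :
    HasDerivAt (fun s => ∑ m ∈ I, c m * scaleGap (t m) (φ m s)) 0 s₀ := by
  simpa using HasDerivAt.fun_sum fun m hm =>
    (hasDerivAt_scaleGap_comp (hφ m hm) (ht m hm) (htpos m hm)).const_mul (c m)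

lemma sum_mul_log_one_add_sub_sum_eq_sum_mul_scaleGap {ι : Type*} (I : Finset ι)
    (w t α c y : ι → ℝ) (hα : ∀ m ∈ I, α m = t m / (1 + t m))
    (hc : ∀ m ∈ I, c m = w m * (log (1 + t m) - α m * log (t m))) :
    ∑ m ∈ I, w m * log (1 + y m) - ∑ m ∈ I, (w m * α m * log (y m) + c m)
      = ∑ m ∈ I, w m * scaleGap (t m) (y m) := by
  rw [← Finset.sum_sub_distrib]
  exact Finset.sum_congr rfl fun m hm => by rw [scaleGap, hc m hm, hα m hm]; ring

lemma linearization_eq_of_tangent {f f₁ G : ℝ → ℝ} {s₀ : ℝ}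
    (hG : ∀ s, f₁ s - f s = G s) (hval : G s₀ = 0) (hderiv : HasDerivAt G 0 s₀) (s : ℝ) :
    f₁ s + (f s₀ - f₁ s₀) + deriv (fun x => f x - f₁ x) s₀ * (s - s₀) = f₁ s := by
  have hneg : (fun x => f x - f₁ x) = fun x => -G x :=
    funext fun x => by rw [← hG]; ring
  have hval' : f s₀ - f₁ s₀ = 0 := by linarith [hG s₀]
  rw [hneg, hderiv.fun_neg.deriv, hval']
  ring

theorem IASB10_tighter_than_SCALE_general
    {ι : Type*} (I : Finset ι)
    (M st w intn : ℝ) (wI aI sI zI : ι → ℝ)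
    (hstpos : 0 < st)
    (hw : 0 < w) (hintn : 0 < intn)
    (hwI : ∀ m ∈ I, 0 < wI m) (haI : ∀ m ∈ I, 0 ≤ aI m)
    (hsI : ∀ m ∈ I, 0 < sI m) (hzI : ∀ m ∈ I, 0 < zI m)
    (xI αI cI : ι → ℝ)
    (hxI : ∀ m ∈ I, xI m = sI m / (aI m * st + zI m))
    (hαI : ∀ m ∈ I, αI m = xI m / (1 + xI m))
    (hcI : ∀ m ∈ I, cI m = wI m * (Real.log (1 + xI m) - αI m * Real.log (xI m)))
    (x0 α0 c0 : ℝ)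
    (hx0 : x0 = st / intn)
    (hα0 : α0 = x0 / (1 + x0))
    (hc0 : c0 = w * (Real.log (1 + x0) - α0 * Real.log x0))
    (f f1IASB10 f1SCALE fIASB10 fSCALE : ℝ → ℝ)
    (hf : f = fun s => -w * Real.log (1 + s / intn)
        - ∑ m ∈ I, wI m * Real.log (1 + sI m / (aI m * s + zI m)))
    (hf1IASB10 : f1IASB10 = fun s => -w * Real.log (1 + s / intn)
        - ∑ m ∈ I, (wI m * αI m * Real.log (sI m / (aI m * s + zI m)) + cI m))
    (hf1SCALE : f1SCALE = fun s => -w * α0 * Real.log (s / intn) - c0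
        - ∑ m ∈ I, (wI m * αI m * Real.log (sI m / (aI m * s + zI m)) + cI m))
    (hfIASB10 : fIASB10 = fun s => f1IASB10 s + (f st - f1IASB10 st)
        + deriv (fun x => f x - f1IASB10 x) st * (s - st))
    (hfSCALE : fSCALE = fun s => f1SCALE s + (f st - f1SCALE st)
        + deriv (fun x => f x - f1SCALE x) st * (s - st)) :
    ∀ s ∈ Set.Ioc 0 M, f s ≤ fIASB10 s ∧ fIASB10 s ≤ fSCALE s := by
  have hden : ∀ m ∈ I, ∀ s, 0 ≤ s → 0 < aI m * s + zI m := fun m hm s hs =>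
    add_pos_of_nonneg_of_pos (mul_nonneg (haI m hm) hs) (hzI m hm)
  have hxpos : ∀ m ∈ I, 0 < xI m := fun m hm => by
    rw [hxI m hm]; exact div_pos (hsI m hm) (hden m hm st hstpos.le)
  have hx0pos : 0 < x0 := by rw [hx0]; positivity
  set G : ℝ → ℝ := fun s => ∑ m ∈ I, wI m * scaleGap (xI m) (sI m / (aI m * s + zI m))
  have hIASB : ∀ s, f1IASB10 s - f s = G s := by
    intro s
    simp only [G, hf, hf1IASB10]
    rw [← sum_mul_log_one_add_sub_sum_eq_sum_mul_scaleGap I wI xI αI cI _ hαI hcI]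
    ring
  have hSCALE : ∀ s, f1SCALE s - f1IASB10 s = w * scaleGap x0 (s / intn) := by
    intro s; simp only [hf1IASB10, hf1SCALE, scaleGap, hc0, hα0]; ring
  have hG_val : G st = 0 :=
    Finset.sum_eq_zero fun m hm => by rw [← hxI m hm, scaleGap_self, mul_zero]
  have hG_deriv : HasDerivAt G 0 st :=
    hasDerivAt_sum_mul_scaleGap_comp I wI xI
      (fun m hm => by fun_prop (disch := exact (hden m hm st hstpos.le).ne'))
      (fun m hm => (hxI m hm).symm) hxpos
  have hfIASB10_eq : fIASB10 = f1IASB10 :=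
    hfIASB10.trans (funext (linearization_eq_of_tangent hIASB hG_val hG_deriv))
  have hfSCALE_eq : fSCALE = f1SCALE := by
    refine hfSCALE.trans (funext (linearization_eq_of_tangent
      (G := fun s => G s + w * scaleGap x0 (s / intn)) (fun s => ?_) ?_ ?_))
    · linarith [hIASB s, hSCALE s]
    · rw [hG_val, ← hx0, scaleGap_self]; ring
    · simpa using hG_deriv.fun_add ((hasDerivAt_scaleGap_comp (φ := (· / intn))
        (by fun_prop) hx0.symm hx0pos).const_mul w)
  rintro s ⟨hs, -⟩
  rw [hfIASB10_eq, hfSCALE_eq]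
  have hG_nonneg : 0 ≤ G s := Finset.sum_nonneg fun m hm => mul_nonneg (hwI m hm).le
    (scaleGap_nonneg (hxpos m hm) (div_pos (hsI m hm) (hden m hm s hs.le)))
  have hdirect_nonneg := mul_nonneg hw.le (scaleGap_nonneg hx0pos (div_pos hs hintn))
  constructor <;> linarith [hIASB s, hSCALE s]

/-- Lemma 7, second part (IASB10 is tighter than SCALE): in the per-user per-tone
spectrum optimization setup, assuming additionally `s̃ > 0`, the approximations
satisfy `f ≤ f^IASB10 ≤ f^SCALE` on `(0, M]`.
Here `f^X = f1_X + LIN(f − f1_X)` with `LIN` the linearization at `s̃`. -/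
theorem IASB10_tighter_than_SCALE
    {ι : Type*} (I : Finset ι)
    (M st w intn : ℝ) (wI aI sI zI : ι → ℝ)
    (hM : 0 < M) (hst : st ∈ Set.Icc 0 M) (hstpos : 0 < st)
    (hw : 0 < w) (hintn : 0 < intn)
    (hwI : ∀ m ∈ I, 0 < wI m) (haI : ∀ m ∈ I, 0 ≤ aI m)
    (hsI : ∀ m ∈ I, 0 < sI m) (hzI : ∀ m ∈ I, 0 < zI m)
    (xI αI cI : ι → ℝ)
    (hxI : ∀ m ∈ I, xI m = sI m / (aI m * st + zI m))
    (hαI : ∀ m ∈ I, αI m = xI m / (1 + xI m))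
    (hcI : ∀ m ∈ I, cI m = wI m * (Real.log (1 + xI m) - αI m * Real.log (xI m)))
    (x0 α0 c0 : ℝ)
    (hx0 : x0 = st / intn)
    (hα0 : α0 = x0 / (1 + x0))
    (hc0 : c0 = w * (Real.log (1 + x0) - α0 * Real.log x0))
    (f f1IASB10 f1SCALE fIASB10 fSCALE : ℝ → ℝ)
    (hf : f = fun s => -w * Real.log (1 + s / intn)
        - ∑ m ∈ I, wI m * Real.log (1 + sI m / (aI m * s + zI m)))
    (hf1IASB10 : f1IASB10 = fun s => -w * Real.log (1 + s / intn)
        - ∑ m ∈ I, (wI m * αI m * Real.log (sI m / (aI m * s + zI m)) + cI m))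
    (hf1SCALE : f1SCALE = fun s => -w * α0 * Real.log (s / intn) - c0
        - ∑ m ∈ I, (wI m * αI m * Real.log (sI m / (aI m * s + zI m)) + cI m))
    (hfIASB10 : fIASB10 = fun s => f1IASB10 s + (f st - f1IASB10 st)
        + deriv (fun x => f x - f1IASB10 x) st * (s - st))
    (hfSCALE : fSCALE = fun s => f1SCALE s + (f st - f1SCALE st)
        + deriv (fun x => f x - f1SCALE x) st * (s - st)) :
    ∀ s ∈ Set.Ioc 0 M, f s ≤ fIASB10 s ∧ fIASB10 s ≤ fSCALE s :=
  IASB10_tighter_than_SCALE_general I M st w intn wI aI sI zI hstpos hw hintn hwI haI hsI hzI xI αI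
    cI hxI hαI hcI x0 α0 c0 hx0 hα0 hc0 f f1IASB10 f1SCALE fIASB10 fSCALE hf hf1IASB10 hf1SCALE
    hfIASB10 hfSCALE
end
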